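/- Let (L, (h_1, h_2)) be a forward self-similar system with m = 2 such that L_x is connected for every infinite word x ∈ {1, 2}^ℕ, and suppose that L is disconnected. Then h_1(L) ∩ h_2(L) = ∅. If, in addition, h_1 : L → L and h_2 : L → L are injective, then there is a bijection between the set of connected components of L and {1, 2}^ℕ, and in particular L has uncountably many connected components. -/

import Mathlib

open Set

/-- `h_{w̄}(L)` for a finite word `w = (w₁, …, w_k)`, encoded as the list `[w₁, …, w_k]`,
namely `h_{w₁}(h_{w₂}(⋯ h_{w_k}(L) ⋯))`, where `L` is the whole space. -/
def fwdIm {L : Type*} {m : ℕ} (h : Fin m → L → L) : List (Fin m) → Set L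
  | [] => Set.univ
  | a :: w => h a '' fwdIm h w

/-- The truncation `x|k` of an infinite word `x`. -/
def wordTrunc {m : ℕ} (x : ℕ → Fin m) (k : ℕ) : List (Fin m) :=
  List.ofFn fun i : Fin k => x i.val

/-- `L_x = ⋂_{j ≥ 1} h_{x₁}(h_{x₂}(⋯ h_{x_j}(L) ⋯))`. -/
def fwdLimSet {L : Type*} {m : ℕ} (h : Fin m → L → L) (x : ℕ → Fin m) : Set L :=
  ⋂ j : ℕ, fwdIm h (wordTrunc x (j + 1))

section aux
variable {L : Type*} {m : ℕ} (h : Fin m → L → L)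

/-- Composition `h_{w₁} ∘ ⋯ ∘ h_{w_k}`. -/
def listComp : List (Fin m) → L → L
  | [] => id
  | a :: w => h a ∘ listComp w

lemma fwdIm_nil : fwdIm h ([] : List (Fin m)) = Set.univ := rfl

lemma fwdIm_cons (a : Fin m) (w : List (Fin m)) : fwdIm h (a :: w) = h a '' fwdIm h w := rfl

lemma fwdIm_append (w w' : List (Fin m)) :
    fwdIm h (w ++ w') = listComp h w '' fwdIm h w' := by
  induction w with
  | nil => simp [listComp, fwdIm]
  | cons a w ih => simp [listComp, fwdIm, ih, Set.image_image]

lemma fwdIm_eq (w : List (Fin m)) : fwdIm h w = listComp h w '' univ := by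
  simpa [fwdIm] using fwdIm_append h w []

lemma fwdIm_append_subset (w w' : List (Fin m)) : fwdIm h (w ++ w') ⊆ fwdIm h w := by
  rw [fwdIm_append, fwdIm_eq h w]
  exact Set.image_mono (subset_univ _)

lemma wordTrunc_succ (x : ℕ → Fin m) (k : ℕ) :
    wordTrunc x (k + 1) = wordTrunc x k ++ [x k] := by
  rw [wordTrunc, wordTrunc, List.ofFn_succ', List.concat_eq_append]
  simp

lemma fwdIm_isCompact [TopologicalSpace L] [CompactSpace L]
    (hcont : ∀ j, Continuous (h j)) (w : List (Fin m)) : IsCompact (fwdIm h w) := by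
  induction w with
  | nil => exact isCompact_univ
  | cons a w ih => exact ih.image (hcont a)

lemma fwdIm_isClosed [MetricSpace L] [CompactSpace L]
    (hcont : ∀ j, Continuous (h j)) (w : List (Fin m)) : IsClosed (fwdIm h w) :=
  (fwdIm_isCompact h hcont w).isClosed

end aux

/-- König's lemma for the binary tree, for a prefix-closed property that holds at
words of every length. -/
lemma koenig (P : List (Fin 2) → Prop)
    (hpref : ∀ w a, P (w ++ [a]) → P w)
    (hlong : ∀ N, ∃ w : List (Fin 2), w.length = N ∧ P w) :
    ∃ x : ℕ → Fin 2, ∀ k, P (wordTrunc x k) := by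
  have hpref' : ∀ u v : List (Fin 2), P (u ++ v) → P u := by
    intro u v hv
    induction v using List.reverseRecOn with
    | nil => simpa using hv
    | append_singleton vs a ih =>
        rw [← List.append_assoc] at hv
        exact ih (hpref _ _ hv)
  set Inf : List (Fin 2) → Prop := fun w => ∀ N, ∃ v : List (Fin 2), v.length = N ∧ P (w ++ v)
    with hInfdef
  have hInfP : ∀ w, Inf w → P w := by
    intro w hw
    obtain ⟨v, hv0, hvP⟩ := hw 0
    rw [List.length_eq_zero_iff.mp hv0, List.append_nil] at hvP
    exact hvP
  have hInfNil : Inf [] := by simpa [hInfdef] using hlong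
  have step : ∀ w, Inf w → ∃ a, Inf (w ++ [a]) := by
    intro w hw
    by_contra hno
    push_neg at hno
    have hno' : ∀ a : Fin 2, ∃ N, ∀ v : List (Fin 2), v.length = N → ¬ P ((w ++ [a]) ++ v) := by
      intro a
      have := hno a
      simp only [hInfdef] at this
      push_neg at this
      exact this
    choose Na hNa using hno'
    obtain ⟨v, hvlen, hvP⟩ := hw (Na 0 + Na 1 + 1)
    cases v with
    | nil => simp at hvlen
    | cons a t =>
        have hle : Na a ≤ t.length := by
          have : Na a ≤ Na 0 + Na 1 := by
            fin_cases a
            · exact Nat.le_add_right _ _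
            · exact Nat.le_add_left _ _
          simp at hvlen; omega
        have h1 : P ((w ++ [a]) ++ t.take (Na a)) := by
          apply hpref' _ (t.drop (Na a))
          rw [List.append_assoc, List.take_append_drop]
          simpa using hvP
        exact hNa a _ (by rw [List.length_take]; omega) h1
  choose pick hpick using step
  let g : ℕ → {w : List (Fin 2) // Inf w} :=
    fun n => Nat.rec ⟨[], hInfNil⟩ (fun _ p => ⟨p.1 ++ [pick p.1 p.2], hpick p.1 p.2⟩) n
  refine ⟨fun n => pick (g n).1 (g n).2, ?_⟩
  have hx : ∀ n, wordTrunc (fun n => pick (g n).1 (g n).2) n = (g n).1 := by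
    intro n
    induction n with
    | zero => rfl
    | succ n ih => rw [wordTrunc_succ, ih]
  intro k
  rw [hx k]
  exact hInfP _ (g k).2

/-- An auxiliary bijection used for the cardinality argument. -/
noncomputable def finTwoSeqEquivSetNat : (ℕ → Fin 2) ≃ Set ℕ :=
  Equiv.arrowCongr (Equiv.refl ℕ) (finTwoEquiv.trans Equiv.propEquivBool.symm)

lemma not_countable_finTwoSeq : ¬ Countable (ℕ → Fin 2) := fun hc => by
  have h2 : Countable (Set ℕ) := Countable.of_equiv _ finTwoSeqEquivSetNat
  obtain ⟨f, hf⟩ := exists_surjective_nat (Set ℕ)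
  exact Function.cantor_surjective f hf

/-- If `(L, (h₁, h₂))` is a forward self-similar system with `m = 2` such that every
`L_x` is connected and `L` is disconnected, then `h₁(L) ∩ h₂(L) = ∅`; if moreover `h₁`
and `h₂` are injective, then the set of connected components of `L` is in bijection with
`{1,2}^ℕ`, and in particular `L` has uncountably many connected components. -/
theorem forward_two_maps_disconnected
    {L : Type*} [MetricSpace L] [CompactSpace L] [Nonempty L]
    (h : Fin 2 → L → L) (hcont : ∀ j, Continuous (h j))
    (hcover : (⋃ j, Set.range (h j)) = Set.univ)
    (hconn : ∀ x : ℕ → Fin 2, IsConnected (fwdLimSet h x))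
    (hdis : ¬ ConnectedSpace L) :
    Set.range (h 0) ∩ Set.range (h 1) = ∅ ∧
    ((∀ j, Function.Injective (h j)) →
      Nonempty ({C : Set L // ∃ y : L, C = connectedComponent y} ≃ (ℕ → Fin 2)) ∧
      ¬ {C : Set L | ∃ y : L, C = connectedComponent y}.Countable) := by
  classical
  have two : Set.range (h 0) ∪ Set.range (h 1) = univ := by
    rw [← hcover]; ext y; simp [Fin.exists_fin_two]
  -- monotonicity of the truncations
  have hmono : ∀ (x : ℕ → Fin 2) (j : ℕ),
      fwdIm h (wordTrunc x (j + 1 + 1)) ⊆ fwdIm h (wordTrunc x (j + 1)) := by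
    intro x j
    rw [wordTrunc_succ]
    exact fwdIm_append_subset h _ _
  -- Part 1: the ranges are disjoint.
  have main1 : ∀ p : L, p ∈ Set.range (h 0) → p ∈ Set.range (h 1) →
      ∀ u : Set L, IsOpen u → IsClosed u → u.Nonempty → uᶜ.Nonempty → False := by
    intro p hp0 hp1 u hu hucl hune hcne
    have key : ∃ N, ∀ w : List (Fin 2), w.length = N → fwdIm h w ⊆ u ∨ fwdIm h w ⊆ uᶜ := by
      by_contra hk
      push_neg at hk
      obtain ⟨x, hx⟩ := koenig (fun w => ¬ fwdIm h w ⊆ u ∧ ¬ fwdIm h w ⊆ uᶜ)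
        (fun w a hw => ⟨fun hsub => hw.1 ((fwdIm_append_subset h w [a]).trans hsub),
                        fun hsub => hw.2 ((fwdIm_append_subset h w [a]).trans hsub)⟩)
        (fun N => by
          obtain ⟨w, h1, h2⟩ := hk N
          exact ⟨w, h1, h2.1, h2.2⟩)
      have hmeet : ∀ s : Set L, IsClosed s →
          (∀ j : ℕ, (fwdIm h (wordTrunc x (j + 1)) ∩ s).Nonempty) →
          (fwdLimSet h x ∩ s).Nonempty := by
        intro s hs hne'
        have hni := IsCompact.nonempty_iInter_of_sequence_nonempty_isCompact_isClosed
          (fun j => fwdIm h (wordTrunc x (j + 1)) ∩ s)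
          (fun j => Set.inter_subset_inter_left s (hmono x j)) hne'
          ((fwdIm_isCompact h hcont _).inter_right hs)
          (fun j => (fwdIm_isClosed h hcont _).inter hs)
        exact hni.mono fun y hy =>
          ⟨Set.mem_iInter.mpr fun j => (Set.mem_iInter.mp hy j).1, (Set.mem_iInter.mp hy 0).2⟩
      have hmu : (fwdLimSet h x ∩ u).Nonempty := by
        refine hmeet u hucl fun j => ?_
        obtain ⟨z, hz1, hz2⟩ := Set.not_subset.mp (hx (j + 1)).2
        exact ⟨z, hz1, not_not.mp hz2⟩
      have hmc : (fwdLimSet h x ∩ uᶜ).Nonempty := by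
        refine hmeet uᶜ (isClosed_compl_iff.mpr hu) fun j => ?_
        obtain ⟨z, hz1, hz2⟩ := Set.not_subset.mp (hx (j + 1)).1
        exact ⟨z, hz1, hz2⟩
      obtain ⟨z, _, hz⟩ := (hconn x).isPreconnected u uᶜ hu hucl.isOpen_compl
        (by rw [Set.union_compl_self]; exact subset_univ _) hmu hmc
      exact hz.2 hz.1
    obtain ⟨N, hN⟩ := key
    have down : ∀ k, ∀ w : List (Fin 2), w.length + k = N →
        fwdIm h w ⊆ u ∨ fwdIm h w ⊆ uᶜ := by
      intro k
      induction k with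
      | zero => intro w hw; exact hN w (by omega)
      | succ k ih =>
          intro w hw
          have c0 := ih (w ++ [(0 : Fin 2)]) (by simp; omega)
          have c1 := ih (w ++ [(1 : Fin 2)]) (by simp; omega)
          have hq0 : listComp h w p ∈ fwdIm h (w ++ [(0 : Fin 2)]) := by
            rw [fwdIm_append]
            exact Set.mem_image_of_mem _ (by simpa [fwdIm] using hp0)
          have hq1 : listComp h w p ∈ fwdIm h (w ++ [(1 : Fin 2)]) := by
            rw [fwdIm_append]
            exact Set.mem_image_of_mem _ (by simpa [fwdIm] using hp1)
          have hsplit : fwdIm h w = fwdIm h (w ++ [(0 : Fin 2)]) ∪ fwdIm h (w ++ [(1 : Fin 2)]) := by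
            rw [fwdIm_append, fwdIm_append, ← Set.image_union, fwdIm_eq]
            simp [fwdIm, two]
          rcases c0 with c0 | c0 <;> rcases c1 with c1 | c1
          · left; rw [hsplit]; exact Set.union_subset c0 c1
          · exact absurd (c0 hq0) (c1 hq1)
          · exact absurd (c1 hq1) (c0 hq0)
          · right; rw [hsplit]; exact Set.union_subset c0 c1
    rcases down N [] (by simp) with hc | hc
    · obtain ⟨b, hb⟩ := hcne
      exact hb (hc (mem_univ b))
    · obtain ⟨b, hb⟩ := hune
      exact hc (mem_univ b) hb
  have part1 : Set.range (h 0) ∩ Set.range (h 1) = ∅ := by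
    by_contra hne
    obtain ⟨p, hp0, hp1⟩ := Set.nonempty_iff_ne_empty.mpr hne
    refine hdis { toNonempty := ‹_›, isPreconnected_univ := ?_ }
    rintro u v hu hv hcov ⟨a, -, hau⟩ ⟨b, -, hbv⟩
    by_contra hcon
    have huv : u ∩ v = ∅ := by
      by_contra h'
      obtain ⟨z, hz⟩ := Set.nonempty_iff_ne_empty.mpr h'
      exact hcon ⟨z, mem_univ z, hz⟩
    have hveq : v = uᶜ := by
      ext z
      constructor
      · intro hzv hzu
        have hm : z ∈ u ∩ v := ⟨hzu, hzv⟩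
        rw [huv] at hm
        exact hm
      · intro hzu
        rcases hcov (mem_univ z) with hz | hz
        · exact absurd hz hzu
        · exact hz
    exact main1 p hp0 hp1 u hu (by rw [← isOpen_compl_iff, ← hveq]; exact hv)
      ⟨a, hau⟩ ⟨b, hveq ▸ hbv⟩
  refine ⟨part1, fun hinj => ?_⟩
  -- Part 2
  have part1' : Set.range (h 1) ∩ Set.range (h 0) = ∅ := by rw [Set.inter_comm]; exact part1
  have hrange : ∀ a a' : Fin 2, a ≠ a' → Set.range (h a) ∩ Set.range (h a') = ∅ := by
    intro a a' hne
    fin_cases a <;> fin_cases a' <;>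
      first | exact absurd rfl hne | exact part1 | exact part1'
  -- disjointness of images of distinct words of equal length
  have hdisjIm : ∀ w w' : List (Fin 2), w.length = w'.length → w ≠ w' →
      fwdIm h w ∩ fwdIm h w' = ∅ := by
    intro w
    induction w with
    | nil =>
        intro w' hl hne
        cases w' with
        | nil => exact absurd rfl hne
        | cons a t => simp at hl
    | cons a t ih =>
        intro w' hl hne
        cases w' with
        | nil => simp at hl
        | cons a' t' =>
            by_cases ha : a = a'
            · subst ha
              have ht : t ≠ t' := fun hh => hne (by rw [hh])
              have hemp := ih t' (by simpa using hl) ht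
              rw [fwdIm_cons, fwdIm_cons, ← Set.image_inter (hinj a), hemp, Set.image_empty]
            · have hsub : fwdIm h (a :: t) ∩ fwdIm h (a' :: t')
                  ⊆ Set.range (h a) ∩ Set.range (h a') := by
                rw [fwdIm_cons, fwdIm_cons]
                exact Set.inter_subset_inter (Set.image_subset_range _ _)
                  (Set.image_subset_range _ _)
              exact Set.subset_empty_iff.mp (by rw [← hrange a a' ha]; exact hsub)
  -- every point is coded by some infinite word
  have hcode : ∀ y : L, ∃ x : ℕ → Fin 2, y ∈ fwdLimSet h x := by
    have hcov' : ∀ y : L, ∃ jz : Fin 2 × L, h jz.1 jz.2 = y := by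
      intro y
      have hy : y ∈ ⋃ j, Set.range (h j) := by rw [hcover]; trivial
      obtain ⟨j, z, hz⟩ := Set.mem_iUnion.mp hy
      exact ⟨(j, z), hz⟩
    choose F hF using hcov'
    intro y
    set z : L → L := fun w => (F w).2 with hzdef
    set xa : ℕ → Fin 2 := fun j => (F (z^[j] y)).1 with hxa
    have claim : ∀ k n, z^[n] y ∈ fwdIm h (List.ofFn fun i : Fin k => xa (n + i.val)) := by
      intro k
      induction k with
      | zero => intro n; simp [fwdIm]
      | succ k ihk =>
          intro n
          rw [List.ofFn_succ, fwdIm_cons]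
          have harr : (List.ofFn fun i : Fin k => xa (n + (Fin.succ i).val))
              = List.ofFn fun i : Fin k => xa ((n + 1) + i.val) := by
            congr 1
            funext i
            congr 1
            simp [Fin.val_succ]
            omega
          rw [harr]
          refine ⟨z^[n + 1] y, ihk (n + 1), ?_⟩
          show h (xa (n + (0 : Fin (k + 1)).val)) (z^[n + 1] y) = z^[n] y
          simp only [Fin.val_zero, Nat.add_zero]
          rw [Function.iterate_succ_apply']
          exact hF _
    refine ⟨xa, Set.mem_iInter.mpr fun j => ?_⟩
    have := claim (j + 1) 0
    simpa [wordTrunc] using this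
  -- covering by the images of words of a fixed length
  have hcoverk : ∀ (k : ℕ) (y : L), ∃ f : Fin k → Fin 2, y ∈ fwdIm h (List.ofFn f) := by
    intro k y
    obtain ⟨x, hx⟩ := hcode y
    cases k with
    | zero => exact ⟨fun _ => 0, by simp [fwdIm]⟩
    | succ j => exact ⟨fun i => x i.val, Set.mem_iInter.mp hx j⟩
  -- each fwdIm of a word is clopen
  have hclopen : ∀ (k : ℕ) (f : Fin k → Fin 2), IsClopen (fwdIm h (List.ofFn f)) := by
    intro k f
    refine ⟨fwdIm_isClosed h hcont _, ?_⟩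
    have hcompl : (fwdIm h (List.ofFn f))ᶜ
        = ⋃ g : {g : Fin k → Fin 2 // g ≠ f}, fwdIm h (List.ofFn g.1) := by
      ext y
      simp only [mem_compl_iff, mem_iUnion]
      constructor
      · intro hy
        obtain ⟨g, hg⟩ := hcoverk k y
        exact ⟨⟨g, fun hgf => hy (hgf ▸ hg)⟩, hg⟩
      · rintro ⟨⟨g, hg⟩, hyg⟩ hyf
        have hemp := hdisjIm (List.ofFn g) (List.ofFn f) (by simp)
          (fun hh => hg (List.ofFn_injective hh))
        have hm : y ∈ fwdIm h (List.ofFn g) ∩ fwdIm h (List.ofFn f) := ⟨hyg, hyf⟩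
        rw [hemp] at hm
        exact hm
    rw [← isClosed_compl_iff, hcompl]
    exact isClosed_iUnion_of_finite fun g => fwdIm_isClosed h hcont _
  -- the connected component of any point of L_x is L_x
  have hcomp : ∀ (x : ℕ → Fin 2) (y : L), y ∈ fwdLimSet h x →
      connectedComponent y = fwdLimSet h x := by
    intro x y hy
    apply Set.Subset.antisymm
    · apply Set.subset_iInter
      intro j
      have hcl : IsClopen (fwdIm h (wordTrunc x (j + 1))) := hclopen (j + 1) fun i => x i.val
      exact hcl.connectedComponent_subset (Set.mem_iInter.mp hy j)
    · exact (hconn x).subset_connectedComponent hy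
  -- distinct words give disjoint limit sets
  have hdisjLim : ∀ x x' : ℕ → Fin 2, x ≠ x' → fwdLimSet h x ∩ fwdLimSet h x' = ∅ := by
    intro x x' hne
    have hex : ∃ k, x k ≠ x' k := by
      by_contra hc
      push_neg at hc
      exact hne (funext hc)
    obtain ⟨k, hk⟩ := hex
    have hwne : wordTrunc x (k + 1) ≠ wordTrunc x' (k + 1) := by
      intro hh
      exact hk (congrFun (List.ofFn_injective hh) ⟨k, k.lt_succ_self⟩)
    have hsub : fwdLimSet h x ∩ fwdLimSet h x'
        ⊆ fwdIm h (wordTrunc x (k + 1)) ∩ fwdIm h (wordTrunc x' (k + 1)) :=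
      Set.inter_subset_inter (Set.iInter_subset _ k) (Set.iInter_subset _ k)
    rw [hdisjIm _ _ (by simp [wordTrunc]) hwne] at hsub
    exact Set.subset_empty_iff.mp hsub
  -- the bijection
  have hmk : ∀ x : ℕ → Fin 2, ∃ y : L, fwdLimSet h x = connectedComponent y := by
    intro x
    obtain ⟨y, hy⟩ := (hconn x).nonempty
    exact ⟨y, (hcomp x y hy).symm⟩
  let e : (ℕ → Fin 2) → {C : Set L // ∃ y : L, C = connectedComponent y} :=
    fun x => ⟨fwdLimSet h x, hmk x⟩
  have hbij : Function.Bijective e := by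
    constructor
    · intro x x' hxx
      by_contra hne
      have hemp := hdisjLim x x' hne
      have heq : fwdLimSet h x = fwdLimSet h x' := congrArg Subtype.val hxx
      obtain ⟨y, hy⟩ := (hconn x).nonempty
      have : y ∈ fwdLimSet h x ∩ fwdLimSet h x' := ⟨hy, heq ▸ hy⟩
      rw [hemp] at this
      exact this
    · rintro ⟨C, y, rfl⟩
      obtain ⟨x, hx⟩ := hcode y
      exact ⟨x, Subtype.ext (hcomp x y hx).symm⟩
  refine ⟨⟨(Equiv.ofBijective e hbij).symm⟩, fun hcount => ?_⟩
  have hsc : Countable {C : Set L // ∃ y : L, C = connectedComponent y} := hcount.to_subtype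
  have : Countable (ℕ → Fin 2) := Countable.of_equiv _ (Equiv.ofBijective e hbij).symm
  exact not_countable_finTwoSeq this
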